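/- arXiv:math/0503151 — 4 statements merged into one kernel-verified Lean document; each statement's English description precedes it below -/
import Mathlib

section
/- Let (A, ω) be a partially ordered set, Y a set, and let 𝔄 be a closed submonoid of the monoid of binary relations on Y (i.e., 𝔄 contains the identity relation Δ_Y, is closed under composition, and is upward closed under inclusion). Define a relation 𝔄(ω) on the set of functions A^Y by: (φ₁, φ₂) ∈ 𝔄(ω) iff the relation {(y₁,y₂) | φ₁(y₁) ≤_ω φ₂(y₂)} belongs to 𝔄. Then 𝔄(ω) is a preorder (reflexive and transitive) on A^Y. -/
/-- Composition of binary relations: `relComp ρ σ` applies `ρ` first, then `σ`;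
this is `σ ∘ ρ` in the paper's notation. -/
def relComp {A B C : Type*} (ρ : Set (A × B)) (σ : Set (B × C)) : Set (A × C) :=
  {p | ∃ b, (p.1, b) ∈ ρ ∧ (b, p.2) ∈ σ}

/-- A closed submonoid of the monoid of binary relations on `Y`. -/
def ClosedSubmonoid {Y : Type*} (𝔄 : Set (Set (Y × Y))) : Prop :=
  (Set.diagonal Y ∈ 𝔄) ∧
  (∀ α β, α ∈ 𝔄 → β ∈ 𝔄 → relComp α β ∈ 𝔄) ∧
  (∀ α β, α ∈ 𝔄 → α ⊆ β → β ∈ 𝔄)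

/-- The relation induced on `Y → A` by a family of relations `𝔄` on `Y`. -/
def indRel {Y A : Type*} [PartialOrder A] (𝔄 : Set (Set (Y × Y))) (φ₁ φ₂ : Y → A) : Prop :=
  {p : Y × Y | φ₁ p.1 ≤ φ₂ p.2} ∈ 𝔄

theorem indRel_preorder {Y A : Type*} [PartialOrder A] (𝔄 : Set (Set (Y × Y)))
    (h𝔄 : ClosedSubmonoid 𝔄) :
    Reflexive (indRel (A := A) 𝔄) ∧ Transitive (indRel (A := A) 𝔄) := by
  obtain ⟨hΔ, hcomp, hup⟩ := h𝔄
  constructor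
  · intro φ
    exact hup _ _ hΔ (fun p hp => by simp_all [Set.diagonal, indRel])
  · intro φ₁ φ₂ φ₃ h12 h23
    refine hup _ _ (hcomp _ _ h12 h23) ?_
    rintro ⟨y₁, y₂⟩ ⟨b, h1, h2⟩
    exact le_trans h1 h2
end

section
/- Let Y be a set and fix y₀ ∈ Y with |Y| ≥ 2. Let ρ = (Y × Y) \ {(y₀, y₀)}. Then ρ ∘ ρ = Y × Y, and consequently the union of the set of all reflexive relations on Y together with the set of all relations containing ρ forms a closed submonoid of the monoid of binary relations on Y. -/
theorem minimal_closed_monoid {Y : Type*} (y₀ : Y) (h2 : ∃ y₁ : Y, y₁ ≠ y₀) :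
    relComp ((Set.univ : Set (Y × Y)) \ {(y₀, y₀)})
      ((Set.univ : Set (Y × Y)) \ {(y₀, y₀)}) = Set.univ ∧
    ClosedSubmonoid ({l : Set (Y × Y) | Set.diagonal Y ⊆ l} ∪
      {l : Set (Y × Y) | (Set.univ : Set (Y × Y)) \ {(y₀, y₀)} ⊆ l}) := by
  obtain ⟨y₁, hy₁⟩ := h2
  have hcomp : relComp ((Set.univ : Set (Y × Y)) \ {(y₀, y₀)})
      ((Set.univ : Set (Y × Y)) \ {(y₀, y₀)}) = Set.univ := by
    ext ⟨a, c⟩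
    simp only [Set.mem_univ, iff_true, relComp, Set.mem_setOf_eq]
    exact ⟨y₁, ⟨trivial, by simp [Prod.ext_iff, hy₁]⟩, ⟨trivial, by simp [Prod.ext_iff, hy₁]⟩⟩
  refine ⟨hcomp, ?_, ?_, ?_⟩
  · left; intro p hp; exact hp
  · rintro α β (hα | hα) (hβ | hβ)
    · left
      rintro ⟨a, b⟩ (rfl : a = b)
      exact ⟨a, hα rfl, hβ rfl⟩
    · right
      rintro ⟨a, c⟩ hac
      exact ⟨a, hα rfl, hβ hac⟩
    · right
      rintro ⟨a, c⟩ hac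
      exact ⟨c, hα hac, hβ rfl⟩
    · right
      intro p hp
      have : p ∈ relComp ((Set.univ : Set (Y × Y)) \ {(y₀, y₀)})
          ((Set.univ : Set (Y × Y)) \ {(y₀, y₀)}) := hcomp.ge (Set.mem_univ p)
      obtain ⟨b, h1, h2⟩ := this
      exact ⟨b, hα h1, hβ h2⟩
  · rintro α β (hα | hα) hsub
    · left; exact hα.trans hsub
    · right; exact hα.trans hsub
end

section
/- Let Y be a set, (A, ω) a partially ordered set, and 𝔄 a closed submonoid of relations on Y with 𝔄 ≠ P(Y×Y) (not all relations). Suppose there exist φ, ψ : Y → A with (φ, ψ) ∈ 𝔄(ω) and ψ(y) <_ω φ(y) for all y ∈ Y. Then for every positive integer k, (A, ω) contains a strictly increasing chain a₁ < a₂ < ... < a_k. -/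
/-!
The empty relation lies below every relation, so a closed monoid containing it is universal;
hence every member of a non-universal closed monoid is nonempty. The powers of
`ρ = {(y, z) | φ y ≤ ψ z} ∈ 𝔄` lie in `𝔄`, so `ρ^k` contains a pair, i.e. a walk
`y₀ ρ y₁ ρ ⋯ ρ y_k`. Along it `φ yᵢ ≤ ψ yᵢ₊₁ < φ yᵢ₊₁`, so `φ` is strictly increasing
on the walk.
-/

def relPow {Y : Type*} (ρ : Set (Y × Y)) (n : ℕ) : Set (Y × Y) :=
  (relComp ρ)^[n] (Set.diagonal Y)

lemma relPow_succ {Y : Type*} (ρ : Set (Y × Y)) (n : ℕ) :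
    relPow ρ (n + 1) = relComp ρ (relPow ρ n) :=
  Function.iterate_succ_apply' _ _ _

lemma exists_strictMono_of_mem_relPow {Y A : Type*} [Preorder A] {ρ : Set (Y × Y)} {f : Y → A}
    (hf : ∀ p ∈ ρ, f p.1 < f p.2) :
    ∀ {n : ℕ} {x y : Y}, (x, y) ∈ relPow ρ n →
      ∃ a : Fin (n + 1) → A, StrictMono a ∧ a 0 = f x
  | 0, x, _, _ => ⟨fun _ ↦ f x, Subsingleton.strictMono (α := Fin 1) _, rfl⟩
  | n + 1, x, y, hxy => by
    rw [relPow_succ] at hxy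
    obtain ⟨b, hxb, hby⟩ := hxy
    obtain ⟨a, ha, ha0⟩ := exists_strictMono_of_mem_relPow hf hby
    have hxa : ∀ j, f x < a j := fun j ↦ (ha0 ▸ hf _ hxb).trans_le (ha.monotone (Fin.zero_le j))
    exact ⟨Fin.cons (f x) a, Fin.strictMono_cons.2 ⟨hxa, ha⟩, rfl⟩

namespace ClosedSubmonoid

variable {Y : Type*} {𝔄 : Set (Set (Y × Y))}

lemma relPow_mem (h𝔄 : ClosedSubmonoid 𝔄) {ρ : Set (Y × Y)} (hρ : ρ ∈ 𝔄) (n : ℕ) :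
    relPow ρ n ∈ 𝔄 := by
  induction n with
  | zero => exact h𝔄.1
  | succ n ih => exact relPow_succ ρ n ▸ h𝔄.2.1 _ _ hρ ih

lemma nonempty_of_mem (h𝔄 : ClosedSubmonoid 𝔄) (hnu : 𝔄 ≠ Set.univ) {s : Set (Y × Y)}
    (hs : s ∈ 𝔄) : s.Nonempty := by
  refine Set.nonempty_iff_ne_empty.2 fun hempty ↦ hnu ?_
  exact Set.eq_univ_of_forall fun β ↦ h𝔄.2.2 s β hs (hempty ▸ Set.empty_subset β)

end ClosedSubmonoid

theorem nonuniversal_chain_general {Y A : Type*} [PartialOrder A]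
    (𝔄 : Set (Set (Y × Y))) (h𝔄 : ClosedSubmonoid 𝔄)
    (hnu : 𝔄 ≠ Set.univ)
    (φ ψ : Y → A) (h : indRel 𝔄 φ ψ) (hlt : ∀ y : Y, ψ y < φ y)
    (k : ℕ) :
    ∃ a : Fin k → A, StrictMono a := by
  have hφ : ∀ p ∈ {p : Y × Y | φ p.1 ≤ ψ p.2}, φ p.1 < φ p.2 :=
    fun p hp ↦ lt_of_le_of_lt hp (hlt p.2)
  obtain ⟨⟨x, y⟩, hxy⟩ := h𝔄.nonempty_of_mem hnu (h𝔄.relPow_mem h k)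
  obtain ⟨a, ha, -⟩ := exists_strictMono_of_mem_relPow hφ hxy
  exact ⟨a ∘ Fin.castSucc, ha.comp Fin.strictMono_castSucc⟩

theorem nonuniversal_chain {Y A : Type*} [PartialOrder A]
    (𝔄 : Set (Set (Y × Y))) (h𝔄 : ClosedSubmonoid 𝔄)
    (hnu : 𝔄 ≠ Set.univ)
    (φ ψ : Y → A) (h : indRel 𝔄 φ ψ) (hlt : ∀ y : Y, ψ y < φ y)
    (k : ℕ) (hk : 0 < k) :
    ∃ a : Fin k → A, StrictMono a :=
  nonuniversal_chain_general 𝔄 h𝔄 hnu φ ψ h hlt k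
end

section
/- Let Y be a set, (A, ω) and (B, δ) partially ordered sets on disjoint underlying sets, and φ₁, ψ₁ : Y → A, φ₂, ψ₂ : Y → B. Define τ on A ∪ B as τ = ω ∪ δ ∪ (δ ∘ φ₂ ∘ ψ₁⁻¹ ∘ ω). Then τ is a partial order on A ∪ B, and ψ₂⁻¹ ∘ τ ∘ φ₁ = (ψ₂⁻¹ ∘ δ ∘ φ₂) ∘ (ψ₁⁻¹ ∘ ω ∘ φ₁). -/
theorem composition_order_construction {Y A B : Type*} [PartialOrder A] [PartialOrder B]
    (φ₁ ψ₁ : Y → A) (φ₂ ψ₂ : Y → B)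
    (τ : Set ((A ⊕ B) × (A ⊕ B)))
    (hτ : τ = {p | ∃ a₁ a₂ : A, p = (Sum.inl a₁, Sum.inl a₂) ∧ a₁ ≤ a₂} ∪
      {p | ∃ b₁ b₂ : B, p = (Sum.inr b₁, Sum.inr b₂) ∧ b₁ ≤ b₂} ∪
      {p | ∃ (a : A) (b : B) (y : Y),
        p = (Sum.inl a, Sum.inr b) ∧ a ≤ ψ₁ y ∧ φ₂ y ≤ b}) :
    ((∀ c, (c, c) ∈ τ) ∧
      (∀ c d e, (c, d) ∈ τ → (d, e) ∈ τ → (c, e) ∈ τ) ∧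
      (∀ c d, (c, d) ∈ τ → (d, c) ∈ τ → c = d)) ∧
    {p : Y × Y | (Sum.inl (φ₁ p.1), Sum.inr (ψ₂ p.2)) ∈ τ} =
      relComp {p : Y × Y | φ₁ p.1 ≤ ψ₁ p.2} {p : Y × Y | φ₂ p.1 ≤ ψ₂ p.2} := by
  subst hτ
  have hll : ∀ a₁ a₂ : A, ((Sum.inl a₁ : A ⊕ B), (Sum.inl a₂ : A ⊕ B)) ∈
      ({p | ∃ a₁ a₂ : A, p = (Sum.inl a₁, Sum.inl a₂) ∧ a₁ ≤ a₂} ∪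
      {p | ∃ b₁ b₂ : B, p = (Sum.inr b₁, Sum.inr b₂) ∧ b₁ ≤ b₂} ∪
      {p | ∃ (a : A) (b : B) (y : Y),
        p = (Sum.inl a, Sum.inr b) ∧ a ≤ ψ₁ y ∧ φ₂ y ≤ b}) ↔ a₁ ≤ a₂ := by
    intro a₁ a₂
    simp [Set.mem_union, Set.mem_setOf_eq, Prod.ext_iff] <;> aesop
  have hrr : ∀ b₁ b₂ : B, ((Sum.inr b₁ : A ⊕ B), (Sum.inr b₂ : A ⊕ B)) ∈
      ({p | ∃ a₁ a₂ : A, p = (Sum.inl a₁, Sum.inl a₂) ∧ a₁ ≤ a₂} ∪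
      {p | ∃ b₁ b₂ : B, p = (Sum.inr b₁, Sum.inr b₂) ∧ b₁ ≤ b₂} ∪
      {p | ∃ (a : A) (b : B) (y : Y),
        p = (Sum.inl a, Sum.inr b) ∧ a ≤ ψ₁ y ∧ φ₂ y ≤ b}) ↔ b₁ ≤ b₂ := by
    intro b₁ b₂
    simp [Set.mem_union, Set.mem_setOf_eq, Prod.ext_iff] <;> aesop
  have hlr : ∀ (a : A) (b : B), ((Sum.inl a : A ⊕ B), (Sum.inr b : A ⊕ B)) ∈
      ({p | ∃ a₁ a₂ : A, p = (Sum.inl a₁, Sum.inl a₂) ∧ a₁ ≤ a₂} ∪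
      {p | ∃ b₁ b₂ : B, p = (Sum.inr b₁, Sum.inr b₂) ∧ b₁ ≤ b₂} ∪
      {p | ∃ (a : A) (b : B) (y : Y),
        p = (Sum.inl a, Sum.inr b) ∧ a ≤ ψ₁ y ∧ φ₂ y ≤ b}) ↔
      ∃ y, a ≤ ψ₁ y ∧ φ₂ y ≤ b := by
    intro a b
    simp [Set.mem_union, Set.mem_setOf_eq, Prod.ext_iff] <;> aesop
  have hrl : ∀ (b : B) (a : A), ((Sum.inr b : A ⊕ B), (Sum.inl a : A ⊕ B)) ∈
      ({p | ∃ a₁ a₂ : A, p = (Sum.inl a₁, Sum.inl a₂) ∧ a₁ ≤ a₂} ∪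
      {p | ∃ b₁ b₂ : B, p = (Sum.inr b₁, Sum.inr b₂) ∧ b₁ ≤ b₂} ∪
      {p | ∃ (a : A) (b : B) (y : Y),
        p = (Sum.inl a, Sum.inr b) ∧ a ≤ ψ₁ y ∧ φ₂ y ≤ b}) ↔ False := by
    intro b a
    simp [Set.mem_union, Set.mem_setOf_eq, Prod.ext_iff] <;> aesop
  refine ⟨⟨?_, ?_, ?_⟩, ?_⟩
  · rintro (a | b)
    · exact (hll a a).mpr le_rfl
    · exact (hrr b b).mpr le_rfl
  · rintro (a | b) (a' | b') (a'' | b'') h1 h2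
    · exact (hll a a'').mpr (le_trans ((hll a a').mp h1) ((hll a' a'').mp h2))
    · obtain ⟨y, hy1, hy2⟩ := (hlr a' b'').mp h2
      exact (hlr a b'').mpr ⟨y, le_trans ((hll a a').mp h1) hy1, hy2⟩
    · exact absurd h2 ((hrl b' a'').mp · )
    · obtain ⟨y, hy1, hy2⟩ := (hlr a b').mp h1
      exact (hlr a b'').mpr ⟨y, hy1, le_trans hy2 ((hrr b' b'').mp h2)⟩
    · exact absurd h1 ((hrl b a').mp ·)
    · exact absurd h1 ((hrl b a').mp ·)
    · exact absurd h2 ((hrl b' a'').mp ·)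
    · exact (hrr b b'').mpr (le_trans ((hrr b b').mp h1) ((hrr b' b'').mp h2))
  · rintro (a | b) (a' | b') h1 h2
    · exact congrArg Sum.inl (le_antisymm ((hll a a').mp h1) ((hll a' a).mp h2))
    · exact absurd h2 ((hrl b' a).mp ·)
    · exact absurd h1 ((hrl b a').mp ·)
    · exact congrArg Sum.inr (le_antisymm ((hrr b b').mp h1) ((hrr b' b).mp h2))
  · ext ⟨y₁, y₂⟩
    simp only [Set.mem_setOf_eq, relComp, hlr] <;> tauto
end
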